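/- Let k ≥ 0 and c ≥ 2 be integers, let A be an admissible list (every entry ≥ 2), and let L be the list consisting of k entries equal to 2 followed by c followed by the entries of A. Then (k(c−1)+1)/(k(c−1)+c) ≤ d'(L)/d(L) < (k(c−2)+1)/(k(c−2)+c−1), where the fractions are rational numbers and d(L) > 0. -/

import Mathlib

/-- The discriminant `d(L)` of a chain with weight list `L`, defined by the recursion
`d([]) = 1`, `d([a]) = a`, `d(a :: b :: L') = a * d(b :: L') - d(L')`. -/
def disc : List ℤ → ℤ
  | [] => 1
  | [a] => a
  | a :: b :: L => a * disc (b :: L) - disc L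

/-- `d'(L) = d(L.tail)` for nonempty `L`, and `d'([]) = 0`. -/
def disc' : List ℤ → ℤ
  | [] => 0
  | _ :: L => disc L

lemma disc_cons (a : ℤ) (M : List ℤ) : disc (a :: M) = a * disc M - disc' M := by
  cases M with
  | nil => simp [disc, disc']
  | cons b L => simp [disc, disc']

lemma adm_bounds (M : List ℤ) (hM : ∀ a ∈ M, 2 ≤ a) :
    0 ≤ disc' M ∧ disc' M < disc M := by
  induction M with
  | nil => simp [disc, disc']
  | cons a L ih =>
    have hL : ∀ b ∈ L, 2 ≤ b := fun b hb => hM b (List.mem_cons_of_mem a hb)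
    have ha : 2 ≤ a := hM a List.mem_cons_self
    obtain ⟨h1, h2⟩ := ih hL
    have hdisc : disc (a :: L) = a * disc L - disc' L := disc_cons a L
    have hd' : disc' (a :: L) = disc L := rfl
    constructor
    · rw [hd']; linarith
    · rw [hd', hdisc]; nlinarith [h1, h2]

lemma rep_formula (c : ℤ) (A : List ℤ) (k : ℕ) :
    disc (List.replicate k (2 : ℤ) ++ c :: A)
      = disc (c :: A) + (k : ℤ) * (disc (c :: A) - disc A) ∧
    disc' (List.replicate k (2 : ℤ) ++ c :: A)
      = disc A + (k : ℤ) * (disc (c :: A) - disc A) := by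
  induction k with
  | zero => simp [disc']
  | succ n ih =>
    obtain ⟨h1, h2⟩ := ih
    have hrep : List.replicate (n + 1) (2 : ℤ) ++ c :: A
        = 2 :: (List.replicate n (2 : ℤ) ++ c :: A) := by
      simp [List.replicate_succ]
    rw [hrep]
    constructor
    · rw [disc_cons, h1, h2]; push_cast; ring
    · show disc _ = _
      rw [h1]; push_cast; ring

theorem e_bounds (k : ℕ) (c : ℤ) (hc : 2 ≤ c) (A : List ℤ) (hA : ∀ a ∈ A, 2 ≤ a)
    (L : List ℤ) (hL : L = List.replicate k (2 : ℤ) ++ c :: A) :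
    0 < disc L ∧
    ((k : ℚ) * ((c : ℚ) - 1) + 1) / ((k : ℚ) * ((c : ℚ) - 1) + (c : ℚ)) ≤
        (disc' L : ℚ) / (disc L : ℚ) ∧
      (disc' L : ℚ) / (disc L : ℚ) <
        ((k : ℚ) * ((c : ℚ) - 2) + 1) / ((k : ℚ) * ((c : ℚ) - 2) + (c : ℚ) - 1) := by
  obtain ⟨hy0, hy1⟩ := adm_bounds A hA
  have hx : disc (c :: A) = c * disc A - disc' A := disc_cons c A
  obtain ⟨hd, hd'⟩ := rep_formula c A k
  rw [← hL] at hd hd'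
  set y := disc A with hy
  set y' := disc' A with hy'
  -- integer facts
  have hkn : (0 : ℤ) ≤ (k : ℤ) := Int.ofNat_nonneg k
  have hdiscL : disc L = c * y - y' + (k : ℤ) * (c * y - y' - y) := by
    rw [hd, hx]
  have hdisc'L : disc' L = y + (k : ℤ) * (c * y - y' - y) := by
    rw [hd', hx]
  have hyy : 0 < y := hy0.trans_lt hy1
  have hstep : 0 ≤ c * y - y' - y := by nlinarith
  have hpos : 0 < disc L := by
    rw [hdiscL]; nlinarith [mul_nonneg hkn hstep]
  refine ⟨hpos, ?_, ?_⟩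
  -- rational facts
  all_goals
    have hposQ : (0 : ℚ) < (disc L : ℚ) := by exact_mod_cast hpos
    have hcQ : (2 : ℚ) ≤ (c : ℚ) := by exact_mod_cast hc
    have hkQ : (0 : ℚ) ≤ (k : ℚ) := Nat.cast_nonneg k
    have hy0Q : (0 : ℚ) ≤ (y' : ℚ) := by exact_mod_cast hy0
    have hy1Q : (y' : ℚ) < (y : ℚ) := by exact_mod_cast hy1
    have hdL : (disc L : ℚ) = (c : ℚ) * y - y' + (k : ℚ) * ((c : ℚ) * y - y' - y) := by
      exact_mod_cast congrArg (Int.cast : ℤ → ℚ) hdiscL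
    have hd'L : (disc' L : ℚ) = (y : ℚ) + (k : ℚ) * ((c : ℚ) * y - y' - y) := by
      exact_mod_cast congrArg (Int.cast : ℤ → ℚ) hdisc'L
  · have hden : (0 : ℚ) < (k : ℚ) * ((c : ℚ) - 1) + (c : ℚ) := by nlinarith
    rw [div_le_div_iff₀ hden hposQ, hdL, hd'L]
    nlinarith
  · have hden : (0 : ℚ) < (k : ℚ) * ((c : ℚ) - 2) + (c : ℚ) - 1 := by nlinarith
    rw [div_lt_div_iff₀ hposQ hden, hdL, hd'L]
    nlinarith
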